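/- Define A_{l,0} = I_{n+1} ⊗ U^l and A_{l,1} = N_l − I_{n+1} ⊗ J_m for l = 0,...,m−1, where N_l comes from a symmetric BGW(n+1,n,n−1) with zero diagonal over C_m = ⟨U⟩. Then the set {A_{l,0}, A_{l,1} : l = 0,...,m−1} forms an association scheme of class 2m−1: these are nonzero (0,1)-matrices summing to J_{(n+1)m}, containing the identity A_{0,0}, closed under transpose, and whose pairwise products are rational linear combinations of the A's; concretely, A_{l,0}A_{l',0} = A_{l+l',0}, A_{l,0}A_{l',1} = A_{l+l',1}, A_{l,1}A_{l',0} = A_{l−l',1}, and A_{l,1}A_{l',1} = n A_{l−l',0} + ((n−1)/m) Σ_{k=0}^{m−1} A_{k,1} (indices mod m). -/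
import Mathlib


open Matrix Kronecker BigOperators
open scoped Classical

noncomputable section

/-- The `m × m` circulant shift matrix. -/
def shiftU (m : ℕ) : Matrix (ZMod m) (ZMod m) ℝ :=
  Matrix.of fun i j => if j = i + 1 then 1 else 0

/-- The `m × m` back-diagonal (exchange) matrix. -/
def exchR (m : ℕ) : Matrix (ZMod m) (ZMod m) ℝ :=
  Matrix.of fun i j => if i + j = -1 then 1 else 0

/-- All-ones matrix. -/
def Jmat (ι : Type*) : Matrix ι ι ℝ := Matrix.of fun _ _ => 1

/-- `W = (w i j)` is a symmetric `BGW(n+1, n, n-1)` with zero diagonal over the cyclic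
group generated by the shift matrix `U` of order `m`: it is symmetric, has zero diagonal,
off-diagonal entries are powers of `U`, and the balance condition holds. -/
def IsSymBGW (m n : ℕ) [NeZero m]
    (w : Fin (n + 1) → Fin (n + 1) → Matrix (ZMod m) (ZMod m) ℝ) : Prop :=
  (∀ i j, w i j = w j i) ∧
  (∀ i, w i i = 0) ∧
  (∀ i j, i ≠ j → ∃ k : ℕ, w i j = shiftU m ^ k) ∧
  (∀ i h : Fin (n + 1), i ≠ h → ∀ g : ZMod m,
    (Finset.univ.filter fun j =>
        w i j ≠ 0 ∧ w h j ≠ 0 ∧ w i j * (w h j)ᵀ = shiftU m ^ g.val).card = (n - 1) / m)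

/-- The block matrix `N_l` with diagonal blocks `J_m` and `(i,j)`-block `w_{ij} Uˡ R`. -/
def NBGW (m n : ℕ) [NeZero m]
    (w : Fin (n + 1) → Fin (n + 1) → Matrix (ZMod m) (ZMod m) ℝ) (l : ZMod m) :
    Matrix (Fin (n + 1) × ZMod m) (Fin (n + 1) × ZMod m) ℝ :=
  Matrix.of fun p q =>
    if p.1 = q.1 then 1 else (w p.1 q.1 * shiftU m ^ l.val * exchR m) p.2 q.2

end

noncomputable section AuxST

set_option linter.unusedSectionVars false
set_option linter.unreachableTactic false
set_option linter.unusedTactic false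

/-- Forward circulant: `1` exactly when `j = i + a`. -/
def Smat (m : ℕ) (a : ZMod m) : Matrix (ZMod m) (ZMod m) ℝ :=
  Matrix.of fun i j => if j = i + a then 1 else 0

/-- Back circulant: `1` exactly when `i + j = a`. -/
def Tmat (m : ℕ) (a : ZMod m) : Matrix (ZMod m) (ZMod m) ℝ :=
  Matrix.of fun i j => if i + j = a then 1 else 0

variable {m : ℕ} [NeZero m]

lemma Smat_zero : Smat m 0 = 1 := by
  ext i j; simp [Smat, Matrix.one_apply, eq_comm]

lemma Smat_transpose (a : ZMod m) : (Smat m a)ᵀ = Smat m (-a) := by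
  ext i j
  simp only [Smat, Matrix.transpose_apply, Matrix.of_apply]
  congr 1
  exact propext ⟨fun h => by first | linear_combination h | linear_combination -h,
    fun h => by first | linear_combination h | linear_combination -h⟩

lemma Tmat_transpose (a : ZMod m) : (Tmat m a)ᵀ = Tmat m a := by
  ext i j
  simp only [Tmat, Matrix.transpose_apply, Matrix.of_apply]
  congr 1
  exact propext ⟨fun h => by first | linear_combination h | linear_combination -h,
    fun h => by first | linear_combination h | linear_combination -h⟩

lemma exchR_eq : exchR m = Tmat m (-1) := rfl

lemma shiftU_eq : shiftU m = Smat m 1 := rfl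

lemma Smat_mul_Smat (a b : ZMod m) : Smat m a * Smat m b = Smat m (a + b) := by
  ext i j
  simp only [Smat, Matrix.mul_apply, Matrix.of_apply]
  rw [Finset.sum_eq_single (i + a)]
  · rw [if_pos rfl, one_mul]
    congr 1
    exact propext ⟨fun h => by first | linear_combination h | linear_combination -h,
      fun h => by first | linear_combination h | linear_combination -h⟩
  · intro z _ hz
    rw [if_neg hz, zero_mul]
  · intro h; exact absurd (Finset.mem_univ _) h

lemma Smat_mul_Tmat (a b : ZMod m) : Smat m a * Tmat m b = Tmat m (b - a) := by
  ext i j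
  simp only [Smat, Tmat, Matrix.mul_apply, Matrix.of_apply]
  rw [Finset.sum_eq_single (i + a)]
  · rw [if_pos rfl, one_mul]
    congr 1
    exact propext ⟨fun h => by first | linear_combination h | linear_combination -h,
      fun h => by first | linear_combination h | linear_combination -h⟩
  · intro z _ hz
    rw [if_neg hz, zero_mul]
  · intro h; exact absurd (Finset.mem_univ _) h

lemma Tmat_mul_Smat (a b : ZMod m) : Tmat m a * Smat m b = Tmat m (a + b) := by
  ext i j
  simp only [Smat, Tmat, Matrix.mul_apply, Matrix.of_apply]
  rw [Finset.sum_eq_single (a - i)]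
  · rw [if_pos (by ring), one_mul]
    congr 1
    exact propext ⟨fun h => by first | linear_combination h | linear_combination -h,
      fun h => by first | linear_combination h | linear_combination -h⟩
  · intro z _ hz
    rw [if_neg (fun h => hz (by first | linear_combination h | linear_combination -h)), zero_mul]
  · intro h; exact absurd (Finset.mem_univ _) h

lemma Tmat_mul_Tmat (a b : ZMod m) : Tmat m a * Tmat m b = Smat m (b - a) := by
  ext i j
  simp only [Smat, Tmat, Matrix.mul_apply, Matrix.of_apply]
  rw [Finset.sum_eq_single (a - i)]
  · rw [if_pos (by ring), one_mul]
    congr 1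
    exact propext ⟨fun h => by first | linear_combination h | linear_combination -h,
      fun h => by first | linear_combination h | linear_combination -h⟩
  · intro z _ hz
    rw [if_neg (fun h => hz (by first | linear_combination h | linear_combination -h)), zero_mul]
  · intro h; exact absurd (Finset.mem_univ _) h

lemma shiftU_pow (a : ℕ) : shiftU m ^ a = Smat m (a : ZMod m) := by
  induction a with
  | zero => simp [Smat_zero]
  | succ k ih =>
    rw [pow_succ, ih, shiftU_eq, Smat_mul_Smat]
    push_cast
    rfl

lemma shiftU_pow_val (a : ZMod m) : shiftU m ^ a.val = Smat m a := by
  rw [shiftU_pow, ZMod.natCast_val, ZMod.cast_id]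

lemma Smat_entry_cases (a : ZMod m) (i j : ZMod m) :
    Smat m a i j = 0 ∨ Smat m a i j = 1 := by
  simp only [Smat, Matrix.of_apply]; split_ifs <;> simp

lemma Tmat_entry_cases (a : ZMod m) (i j : ZMod m) :
    Tmat m a i j = 0 ∨ Tmat m a i j = 1 := by
  simp only [Tmat, Matrix.of_apply]; split_ifs <;> simp

lemma Smat_ne_zero (a : ZMod m) : Smat m a ≠ 0 := by
  intro h
  have := congrFun (congrFun h 0) a
  simp [Smat] at this

lemma Smat_inj {a b : ZMod m} (h : Smat m a = Smat m b) : a = b := by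
  by_contra hab
  have := congrFun (congrFun h 0) a
  simp only [Smat, Matrix.of_apply, zero_add] at this
  rw [if_pos trivial, if_neg hab] at this
  exact one_ne_zero this

lemma Smat_sum : ∑ a : ZMod m, Smat m a = Jmat (ZMod m) := by
  ext i j
  rw [Matrix.sum_apply]
  simp only [Smat, Matrix.of_apply, Jmat]
  rw [Finset.sum_eq_single (j - i)]
  · rw [if_pos (by ring)]
  · intro a _ ha
    exact if_neg (fun h => ha (by first | linear_combination h | linear_combination -h))
  · intro h; exact absurd (Finset.mem_univ _) h

lemma Tmat_sum : ∑ a : ZMod m, Tmat m a = Jmat (ZMod m) := by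
  ext i j
  rw [Matrix.sum_apply]
  simp only [Tmat, Matrix.of_apply, Jmat]
  rw [Finset.sum_eq_single (i + j)]
  · rw [if_pos rfl]
  · intro a _ ha
    exact if_neg (fun h => ha h.symm)
  · intro h; exact absurd (Finset.mem_univ _) h

lemma Tmat_sum_shift (c : ZMod m) : ∑ a : ZMod m, Tmat m (c - a) = Jmat (ZMod m) := by
  rw [← Tmat_sum]
  exact Fintype.sum_equiv (Equiv.subLeft c) _ _ (fun a => rfl)

lemma Smat_sum_shift (c : ZMod m) : ∑ a : ZMod m, Smat m (a + c) = Jmat (ZMod m) := by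
  rw [← Smat_sum]
  exact Fintype.sum_equiv (Equiv.addRight c) _ _ (fun a => rfl)

/-- Block-matrix constructor. -/
def blockM (m n : ℕ) (B : Fin (n + 1) → Fin (n + 1) → Matrix (ZMod m) (ZMod m) ℝ) :
    Matrix (Fin (n + 1) × ZMod m) (Fin (n + 1) × ZMod m) ℝ :=
  Matrix.of fun p q => B p.1 q.1 p.2 q.2

variable {n : ℕ}

lemma blockM_apply (B : Fin (n + 1) → Fin (n + 1) → Matrix (ZMod m) (ZMod m) ℝ) (p q) :
    blockM m n B p q = B p.1 q.1 p.2 q.2 := rfl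

lemma blockM_congr {B B' : Fin (n + 1) → Fin (n + 1) → Matrix (ZMod m) (ZMod m) ℝ}
    (h : ∀ i j, B i j = B' i j) : blockM m n B = blockM m n B' := by
  ext p q
  rw [blockM_apply, blockM_apply, h]

lemma blockM_mul (B B' : Fin (n + 1) → Fin (n + 1) → Matrix (ZMod m) (ZMod m) ℝ) :
    blockM m n B * blockM m n B' = blockM m n fun i h => ∑ j, B i j * B' j h := by
  ext p q
  simp only [blockM_apply, Matrix.mul_apply, Matrix.sum_apply, Fintype.sum_prod_type]

lemma blockM_transpose (B : Fin (n + 1) → Fin (n + 1) → Matrix (ZMod m) (ZMod m) ℝ) :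
    (blockM m n B)ᵀ = blockM m n fun i j => (B j i)ᵀ := rfl

lemma blockM_sum {ι : Type*} (s : Finset ι)
    (B : ι → Fin (n + 1) → Fin (n + 1) → Matrix (ZMod m) (ZMod m) ℝ) :
    ∑ x ∈ s, blockM m n (B x) = blockM m n fun i j => ∑ x ∈ s, B x i j := by
  ext p q
  simp [blockM_apply, Matrix.sum_apply]

lemma blockM_add (B B' : Fin (n + 1) → Fin (n + 1) → Matrix (ZMod m) (ZMod m) ℝ) :
    blockM m n B + blockM m n B' = blockM m n fun i j => B i j + B' i j := rfl

lemma blockM_smul (c : ℝ) (B : Fin (n + 1) → Fin (n + 1) → Matrix (ZMod m) (ZMod m) ℝ) :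
    c • blockM m n B = blockM m n fun i j => c • B i j := rfl

lemma Jmat_blockM : Jmat (Fin (n + 1) × ZMod m) = blockM m n fun _ _ => Jmat (ZMod m) := rfl

end AuxST

set_option linter.unusedSectionVars false in
lemma one_kronecker_pow {m N : ℕ} [NeZero m] (X : Matrix (ZMod m) (ZMod m) ℝ) (k : ℕ) :
    ((1 : Matrix (Fin N) (Fin N) ℝ) ⊗ₖ X) ^ k = 1 ⊗ₖ (X ^ k) := by
  induction k with
  | zero => simp [Matrix.one_kronecker_one]
  | succ t ih => rw [pow_succ, ih, pow_succ, ← Matrix.mul_kronecker_mul, one_mul]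
set_option linter.unusedSectionVars false
set_option maxHeartbeats 1000000

/-- The matrices `A_{l,0} = I_{n+1} ⊗ Uˡ` and `A_{l,1} = N_l - I_{n+1} ⊗ J_m`
form a (non-commutative) association scheme of class `2m - 1`: they are nonzero
`(0,1)`-matrices, `A_{0,0}` is the identity, they sum to the all-ones matrix, the family
is closed under transposition, and the products satisfy the stated rules. -/
theorem BGW_association_scheme (m n : ℕ) [NeZero m] (hn : 1 ≤ n) (hmn : m ∣ n - 1)
    (w : Fin (n + 1) → Fin (n + 1) → Matrix (ZMod m) (ZMod m) ℝ)
    (hW : IsSymBGW m n w)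
    (A0 : ZMod m → Matrix (Fin (n + 1) × ZMod m) (Fin (n + 1) × ZMod m) ℝ)
    (A1 : ZMod m → Matrix (Fin (n + 1) × ZMod m) (Fin (n + 1) × ZMod m) ℝ)
    (hA0 : ∀ l, A0 l = (1 : Matrix (Fin (n + 1)) (Fin (n + 1)) ℝ) ⊗ₖ shiftU m ^ l.val)
    (hA1 : ∀ l, A1 l = NBGW m n w l
        - (1 : Matrix (Fin (n + 1)) (Fin (n + 1)) ℝ) ⊗ₖ Jmat (ZMod m)) :
    (A0 0 = 1) ∧
    (∀ l, A0 l ≠ 0 ∧ A1 l ≠ 0) ∧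
    (∀ l, ∀ p q, (A0 l p q = 0 ∨ A0 l p q = 1) ∧ (A1 l p q = 0 ∨ A1 l p q = 1)) ∧
    (∑ l : ZMod m, (A0 l + A1 l) = Jmat (Fin (n + 1) × ZMod m)) ∧
    (∀ l, (A0 l)ᵀ = A0 (-l) ∧ (A1 l)ᵀ = A1 l) ∧
    (∀ l l', A0 l * A0 l' = A0 (l + l')) ∧
    (∀ l l', A0 l * A1 l' = A1 (l + l')) ∧
    (∀ l l', A1 l * A0 l' = A1 (l - l')) ∧
    (∀ l l', A1 l * A1 l'
        = (n : ℝ) • A0 (l - l')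
          + (((n : ℝ) - 1) / (m : ℝ)) • ∑ k : ZMod m, A1 k) := by
  obtain ⟨hsymm, hdiag, hpow, hbal⟩ := hW
  -- choose exponents
  have hKex : ∀ i j, ∃ k : ZMod m, (i ≠ j → w i j = Smat m k) := by
    intro i j
    by_cases hij : i = j
    · exact ⟨0, fun hc => absurd hij hc⟩
    · obtain ⟨k, hk⟩ := hpow i j hij
      exact ⟨(k : ZMod m), fun _ => by rw [hk, shiftU_pow]⟩
  choose K hK using hKex
  have hKs : ∀ i j, i ≠ j → K i j = K j i := by
    intro i j hij
    exact Smat_inj ((hK i j hij).symm.trans ((hsymm i j).trans (hK j i (Ne.symm hij))))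
  -- block representations
  have hA0' : ∀ l, A0 l = blockM m n (fun i j => if i = j then Smat m l else 0) := by
    intro l
    rw [hA0 l, one_kronecker_pow, shiftU_pow_val]
    ext p q
    rw [blockM_apply]
    by_cases hpq : p.1 = q.1
    · simp [Matrix.kroneckerMap_apply, Matrix.one_apply, hpq]
    · simp [Matrix.kroneckerMap_apply, Matrix.one_apply, hpq]
  have hA1' : ∀ l, A1 l = blockM m n
      (fun i j => if i = j then 0 else Tmat m (-1 - K i j - l)) := by
    intro l
    rw [hA1 l]
    ext p q
    rw [blockM_apply]
    by_cases hpq : p.1 = q.1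
    · simp [NBGW, Matrix.kroneckerMap_apply, Matrix.one_apply, hpq, Jmat]
    · have hblock : w p.1 q.1 * shiftU m ^ l.val * exchR m = Tmat m (-1 - K p.1 q.1 - l) := by
        rw [hK p.1 q.1 hpq, shiftU_pow_val, exchR_eq, Smat_mul_Smat, Smat_mul_Tmat]
        congr 1; ring
      simp only [Matrix.sub_apply, NBGW, Matrix.of_apply, if_neg hpq,
        Matrix.kroneckerMap_apply, Matrix.one_apply, hblock]
      simp [hpq]
  have hm0 : 0 < m := Nat.pos_of_ne_zero (NeZero.ne m)
  have hc : (((n - 1) / m : ℕ) : ℝ) = ((n : ℝ) - 1) / (m : ℝ) := by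
    obtain ⟨t, ht⟩ := hmn
    have hn' : n = m * t + 1 := by omega
    subst hn'
    rw [Nat.add_sub_cancel, Nat.mul_div_cancel_left t hm0]
    have hmR : (m : ℝ) ≠ 0 := Nat.cast_ne_zero.mpr hm0.ne'
    rw [eq_div_iff hmR]
    push_cast
    ring
  refine ⟨?_, ?_, ?_, ?_, ?_, ?_, ?_, ?_, ?_⟩
  · -- A0 0 = 1
    rw [hA0 0]
    simp [ZMod.val_zero, Matrix.one_kronecker_one]
  · -- nonzero
    intro l
    constructor
    · rw [hA0' l]
      intro h
      have := congrFun (congrFun h (⟨0, 0⟩ : Fin (n + 1) × ZMod m)) ⟨0, l⟩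
      rw [blockM_apply] at this
      simp [Smat] at this
    · rw [hA1' l]
      have h01 : (0 : Fin (n + 1)) ≠ 1 := by
        intro hcon
        have := congrArg Fin.val hcon
        rw [Fin.val_zero, Fin.val_one'] at this
        rw [Nat.mod_eq_of_lt (by omega)] at this
        omega
      intro h
      have := congrFun (congrFun h (⟨0, 0⟩ : Fin (n + 1) × ZMod m))
        ⟨1, -1 - K 0 1 - l⟩
      rw [blockM_apply] at this
      simp only [if_neg h01] at this
      simp [Tmat] at this
  · -- entries 0/1
    intro l p q
    rw [hA0' l, hA1' l]
    constructor
    · rw [blockM_apply]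
      split_ifs
      · exact Smat_entry_cases _ _ _
      · left; rfl
    · rw [blockM_apply]
      split_ifs
      · left; rfl
      · exact Tmat_entry_cases _ _ _
  · -- sum = J
    rw [show (∑ l : ZMod m, (A0 l + A1 l))
        = ∑ l : ZMod m, blockM m n (fun i j =>
            (if i = j then Smat m l else 0) + (if i = j then 0 else Tmat m (-1 - K i j - l)))
      from Finset.sum_congr rfl fun l _ => by rw [hA0' l, hA1' l]; rfl]
    rw [blockM_sum, Jmat_blockM]
    apply blockM_congr
    intro i j
    by_cases hij : i = j
    · simp only [if_pos hij, add_zero]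
      exact Smat_sum
    · simp only [if_neg hij, zero_add]
      exact Tmat_sum_shift _
  · -- transpose
    intro l
    constructor
    · rw [hA0' l, hA0' (-l), blockM_transpose]
      apply blockM_congr
      intro i j
      rw [apply_ite Matrix.transpose, Matrix.transpose_zero, Smat_transpose]
      by_cases hij : i = j
      · rw [if_pos hij.symm, if_pos hij]
      · rw [if_neg (Ne.symm hij), if_neg hij]
    · rw [hA1' l, blockM_transpose]
      apply blockM_congr
      intro i j
      rw [apply_ite Matrix.transpose, Matrix.transpose_zero, Tmat_transpose]
      by_cases hij : i = j
      · rw [if_pos hij.symm, if_pos hij]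
      · rw [if_neg (Ne.symm hij), if_neg hij, hKs j i (Ne.symm hij)]
  · -- A0 * A0
    intro l l'
    rw [hA0' l, hA0' l', hA0' (l + l'), blockM_mul]
    apply blockM_congr
    intro i h
    rw [Finset.sum_eq_single i]
    · rw [if_pos rfl]
      by_cases hih : i = h
      · rw [if_pos hih, if_pos hih, Smat_mul_Smat]
      · rw [if_neg hih, if_neg hih, mul_zero]
    · intro j _ hj
      rw [if_neg (fun hcon => hj hcon.symm), zero_mul]
    · intro habs; exact absurd (Finset.mem_univ _) habs
  · -- A0 * A1
    intro l l'
    rw [hA0' l, hA1' l', hA1' (l + l'), blockM_mul]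
    apply blockM_congr
    intro i h
    rw [Finset.sum_eq_single i]
    · rw [if_pos rfl]
      by_cases hih : i = h
      · rw [if_pos hih, if_pos hih, mul_zero]
      · rw [if_neg hih, if_neg hih, Smat_mul_Tmat]
        congr 1; ring
    · intro j _ hj
      rw [if_neg (fun hcon => hj hcon.symm), zero_mul]
    · intro habs; exact absurd (Finset.mem_univ _) habs
  · -- A1 * A0
    intro l l'
    rw [hA1' l, hA0' l', hA1' (l - l'), blockM_mul]
    apply blockM_congr
    intro i h
    rw [Finset.sum_eq_single h]
    · rw [if_pos rfl]
      by_cases hih : i = h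
      · rw [if_pos hih, if_pos hih, zero_mul]
      · rw [if_neg hih, if_neg hih, Tmat_mul_Smat]
        congr 1; ring
    · intro j _ hj
      rw [if_neg hj, mul_zero]
    · intro habs; exact absurd (Finset.mem_univ _) habs
  · -- A1 * A1
    intro l l'
    have hsum1 : (∑ k : ZMod m, A1 k)
        = blockM m n fun i j => if i = j then (0 : Matrix (ZMod m) (ZMod m) ℝ)
            else Jmat (ZMod m) := by
      rw [show (∑ k : ZMod m, A1 k) = ∑ k : ZMod m, blockM m n
          (fun i j => if i = j then 0 else Tmat m (-1 - K i j - k))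
        from Finset.sum_congr rfl fun k _ => hA1' k]
      rw [blockM_sum]
      apply blockM_congr
      intro i j
      by_cases hij : i = j
      · simp [hij]
      · simp only [if_neg hij]
        exact Tmat_sum_shift _
    rw [hA1' l, hA1' l', hA0' (l - l'), hsum1, blockM_mul, blockM_smul, blockM_smul,
      blockM_add]
    apply blockM_congr
    intro i h
    -- restrict the sum to j ∉ {i, h}
    have hzero : ∀ j ∈ Finset.univ, j ∉ Finset.univ.filter (fun j => ¬ j = i ∧ ¬ j = h) →
        (if i = j then 0 else Tmat m (-1 - K i j - l)) *
          (if j = h then 0 else Tmat m (-1 - K j h - l')) = 0 := by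
      intro j _ hj
      simp only [Finset.mem_filter, Finset.mem_univ, true_and, not_and_or, not_not] at hj
      rcases hj with hj | hj
      · rw [if_pos hj.symm, zero_mul]
      · rw [if_pos hj, mul_zero]
    have hstep : (∑ j, (if i = j then 0 else Tmat m (-1 - K i j - l)) *
          (if j = h then 0 else Tmat m (-1 - K j h - l')))
        = ∑ j ∈ Finset.univ.filter (fun j => ¬ j = i ∧ ¬ j = h),
            Smat m (K i j - K j h + (l - l')) := by
      rw [← Finset.sum_subset (Finset.filter_subset _ _) hzero]
      refine Finset.sum_congr rfl fun j hj => ?_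
      rw [Finset.mem_filter] at hj
      obtain ⟨-, hji, hjh⟩ := hj
      rw [if_neg (fun hcon => hji hcon.symm), if_neg hjh, Tmat_mul_Tmat]
      congr 1; ring
    rw [hstep]
    by_cases hih : i = h
    · -- diagonal block
      subst hih
      rw [Finset.sum_congr rfl (fun j hj => show Smat m (K i j - K j i + (l - l'))
            = Smat m (l - l') from by
          rw [Finset.mem_filter] at hj
          rw [hKs i j (fun hcon => hj.2.1 hcon.symm)]
          congr 1; ring)]
      rw [Finset.sum_const]
      have hcard : (Finset.univ.filter fun j => ¬ j = i ∧ ¬ j = i).card = n := by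
        have hset : (Finset.univ.filter fun j : Fin (n + 1) => ¬ j = i ∧ ¬ j = i)
            = Finset.univ.erase i := by
          ext j; simp [Finset.mem_erase, Ne, and_comm]
        rw [hset, Finset.card_erase_of_mem (Finset.mem_univ _),
          Finset.card_univ, Fintype.card_fin]
        omega
      rw [hcard, if_pos rfl, if_pos rfl, smul_zero, add_zero,
        ← Nat.cast_smul_eq_nsmul ℝ]
    · -- off-diagonal block
      have hcard2 : ∀ g : ZMod m,
          ((Finset.univ.filter fun j => ¬ j = i ∧ ¬ j = h).filter
            (fun j => K i j - K j h = g)).card = (n - 1) / m := by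
        intro g
        rw [← hbal i h hih g]
        congr 1
        rw [Finset.filter_filter]
        apply Finset.filter_congr
        intro j _
        constructor
        · rintro ⟨⟨hji, hjh⟩, hphi⟩
          have hij' : i ≠ j := fun hcon => hji hcon.symm
          have hhj' : h ≠ j := fun hcon => hjh hcon.symm
          refine ⟨by rw [hK i j hij']; exact Smat_ne_zero _,
            by rw [hK h j hhj']; exact Smat_ne_zero _, ?_⟩
          rw [hK i j hij', hK h j hhj', Smat_transpose, Smat_mul_Smat, shiftU_pow_val]
          congr 1
          rw [← hphi, hKs j h hjh]
          ring
        · rintro ⟨hwi, hwh, hprod⟩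
          have hji : ¬ j = i := fun hcon => hwi (by rw [hcon]; exact hdiag i)
          have hjh : ¬ j = h := fun hcon => hwh (by rw [hcon]; exact hdiag h)
          refine ⟨⟨hji, hjh⟩, ?_⟩
          have hij' : i ≠ j := fun hcon => hji hcon.symm
          have hhj' : h ≠ j := fun hcon => hjh hcon.symm
          rw [hK i j hij', hK h j hhj', Smat_transpose, Smat_mul_Smat,
            shiftU_pow_val] at hprod
          have := Smat_inj hprod
          rw [hKs j h hjh]
          rw [← this]
          ring
      calc ∑ j ∈ Finset.univ.filter (fun j => ¬ j = i ∧ ¬ j = h),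
            Smat m (K i j - K j h + (l - l'))
          = ∑ g : ZMod m, ∑ j ∈ (Finset.univ.filter
              (fun j => ¬ j = i ∧ ¬ j = h)).filter (fun j => K i j - K j h = g),
              Smat m (g + (l - l')) :=
            (Finset.sum_fiberwise' _ (fun j => K i j - K j h)
              (fun g => Smat m (g + (l - l')))).symm
        _ = ∑ g : ZMod m, ((n - 1) / m : ℕ) • Smat m (g + (l - l')) :=
            Finset.sum_congr rfl fun g _ => by rw [Finset.sum_const, hcard2 g]
        _ = ((n - 1) / m : ℕ) • ∑ g : ZMod m, Smat m (g + (l - l')) :=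
            (Finset.smul_sum).symm
        _ = ((n - 1) / m : ℕ) • Jmat (ZMod m) := by rw [Smat_sum_shift]
        _ = (n : ℝ) • (if i = h then Smat m (l - l') else 0)
            + (((n : ℝ) - 1) / (m : ℝ)) • (if i = h then 0 else Jmat (ZMod m)) := by
            rw [if_neg hih, if_neg hih, smul_zero, zero_add,
              ← Nat.cast_smul_eq_nsmul ℝ, hc]
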